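/- Let S and A be finite sets, γ ∈ [0,1), d₀ a probability distribution on S, and let M and M' be two MDPs sharing S, A, γ, d₀ with transition functions P and P'. If there exists ε_P ≥ 0 such that for all s ∈ S and a ∈ A, ∑_{s'∈S} |P(s'|s,a) − P'(s'|s,a)| ≤ ε_P, then for every policy π, ∑_{s∈S} |d^π(s, M) − d^π(s, M')| ≤ γ·(1−γ)^{-1}·ε_P. -/

import Mathlib

open scoped BigOperators

/-- The distribution over states at time `t` when running policy `pol` in an MDP
with transition function `P` and start-state distribution `d0`. -/
noncomputable def stateDist {S A : Type*} [Fintype S] [Fintype A]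
    (P : S → A → S → ℝ) (pol : S → A → ℝ) (d0 : S → ℝ) : ℕ → S → ℝ
  | 0 => d0
  | (t + 1) => fun s' => ∑ s : S, ∑ a : A, stateDist P pol d0 t s * pol s a * P s a s'

/-- The performance `ρ(π, M) = ∑_{t=0}^∞ γ^t E[R(S_t, A_t)]`. -/
noncomputable def perf {S A : Type*} [Fintype S] [Fintype A]
    (P : S → A → S → ℝ) (R : S → A → ℝ) (pol : S → A → ℝ)
    (d0 : S → ℝ) (γ : ℝ) : ℝ :=
  ∑' t : ℕ, γ ^ t * ∑ s : S, stateDist P pol d0 t s * ∑ a : A, pol s a * R s a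

/-- `P s a : S → ℝ` is a probability distribution over next states for each `(s, a)`. -/
def IsTransition {S A : Type*} [Fintype S] (P : S → A → S → ℝ) : Prop :=
  ∀ s a, (∀ s', 0 ≤ P s a s') ∧ ∑ s' : S, P s a s' = 1

/-- `pol s : A → ℝ` is a probability distribution over actions for each state `s`. -/
def IsPolicy {S A : Type*} [Fintype A] (pol : S → A → ℝ) : Prop :=
  ∀ s, (∀ a, 0 ≤ pol s a) ∧ ∑ a : A, pol s a = 1

/-- `d0` is a probability distribution over states. -/
def IsDist {S : Type*} [Fintype S] (d0 : S → ℝ) : Prop :=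
  (∀ s, 0 ≤ d0 s) ∧ ∑ s : S, d0 s = 1


/-- The discounted state occupancy `d^π(s, M) := (1−γ) ∑_{t=0}^∞ γ^t Pr(S_t = s)`. -/
noncomputable def occupancy {S A : Type*} [Fintype S] [Fintype A]
    (P : S → A → S → ℝ) (pol : S → A → ℝ) (d0 : S → ℝ) (γ : ℝ) (s : S) : ℝ :=
  (1 - γ) * ∑' t : ℕ, γ ^ t * stateDist P pol d0 t s


/-!
Running the same policy in both MDPs, the state distributions obey `d_{t+1} = d_t K` and
`d'_{t+1} = d'_t K'`, where the one-step kernels satisfy `‖K‖₁ ≤ 1` and `‖d'_t (K - K')‖₁ ≤ εP`.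
Hence `‖d_{t+1} - d'_{t+1}‖₁ ≤ ‖d_t - d'_t‖₁ + εP`, so `‖d_t - d'_t‖₁ ≤ t εP`, and summing against
the weights `(1 - γ) γ^t` gives `(1 - γ) ∑ t γ^t t εP = γ (1 - γ)⁻¹ εP`.
-/

open Finset

theorem sum_abs_tsum_le_tsum {ι β : Type*} [Fintype ι] {f : β → ι → ℝ} {b : β → ℝ}
    (hb : Summable b) (hfb : ∀ t, ∑ i, |f t i| ≤ b t) :
    ∑ i, |∑' t, f t i| ≤ ∑' t, b t := by
  have hle : ∀ t i, ‖|f t i|‖ ≤ b t := fun t i => by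
    rw [Real.norm_eq_abs, abs_abs]
    exact (single_le_sum (fun j _ => abs_nonneg (f t j)) (mem_univ i)).trans (hfb t)
  have habs : ∀ i, Summable fun t => |f t i| := fun i => hb.of_norm_bounded (hle · i)
  calc ∑ i, |∑' t, f t i| ≤ ∑ i, ∑' t, |f t i| :=
        sum_le_sum fun i _ => norm_tsum_le_tsum_norm (f := (f · i)) (habs i)
    _ = ∑' t, ∑ i, |f t i| := (Summable.tsum_finsetSum fun i _ => habs i).symm
    _ ≤ ∑' t, b t := (summable_sum fun i _ => habs i).tsum_le_tsum hfb hb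

section MDP

variable {S A : Type*} [Fintype S] [Fintype A]

theorem sum_sum_sum_eq_sum_sum_mul_sum (w : S → A → ℝ) (g : S → A → S → ℝ) :
    ∑ s', ∑ s, ∑ a, w s a * g s a s' = ∑ s, ∑ a, w s a * ∑ s', g s a s' := by
  simp only [mul_sum]
  rw [sum_comm]
  exact sum_congr rfl fun s _ => sum_comm

noncomputable def nextDist (P : S → A → S → ℝ) (pol : S → A → ℝ) (x : S → ℝ) (s' : S) : ℝ :=
  ∑ s, ∑ a, x s * pol s a * P s a s'

theorem stateDist_succ (P : S → A → S → ℝ) (pol : S → A → ℝ) (d0 : S → ℝ) (t : ℕ) :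
    stateDist P pol d0 (t + 1) = nextDist P pol (stateDist P pol d0 t) :=
  rfl

theorem nextDist_sub (P : S → A → S → ℝ) (pol : S → A → ℝ) (x y : S → ℝ) :
    nextDist P pol x - nextDist P pol y = nextDist P pol (x - y) := by
  ext s'
  simp only [nextDist, Pi.sub_apply, ← sum_sub_distrib, sub_mul]

theorem sum_abs_nextDist_le {P : S → A → S → ℝ} {pol : S → A → ℝ}
    (hP : IsTransition P) (hpol : IsPolicy pol) (x : S → ℝ) :
    ∑ s', |nextDist P pol x s'| ≤ ∑ s, |x s| := by
  calc ∑ s', |nextDist P pol x s'| ≤ ∑ s', ∑ s, ∑ a, |x s| * pol s a * P s a s' := by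
        refine sum_le_sum fun s' _ => (abs_sum_le_sum_abs _ _).trans <|
          sum_le_sum fun s _ => (abs_sum_le_sum_abs _ _).trans <|
            le_of_eq <| sum_congr rfl fun a _ => ?_
        rw [abs_mul, abs_mul, abs_of_nonneg ((hpol s).1 a), abs_of_nonneg ((hP s a).1 s')]
    _ = ∑ s, ∑ a, |x s| * pol s a * ∑ s', P s a s' :=
        sum_sum_sum_eq_sum_sum_mul_sum (fun s a => |x s| * pol s a) P
    _ = ∑ s, |x s| := by
        simp only [(hP _ _).2, mul_one, ← mul_sum, (hpol _).2]

theorem sum_abs_nextDist_sub_nextDist_le {P P' : S → A → S → ℝ} {pol : S → A → ℝ} {εP : ℝ}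
    (hPclose : ∀ s a, ∑ s', |P s a s' - P' s a s'| ≤ εP) (hpol : IsPolicy pol)
    {y : S → ℝ} (hy : IsDist y) :
    ∑ s', |nextDist P pol y s' - nextDist P' pol y s'| ≤ εP := by
  have hw : ∀ s a, 0 ≤ y s * pol s a := fun s a => mul_nonneg (hy.1 s) ((hpol s).1 a)
  calc ∑ s', |nextDist P pol y s' - nextDist P' pol y s'|
      ≤ ∑ s', ∑ s, ∑ a, y s * pol s a * |P s a s' - P' s a s'| := by
        refine sum_le_sum fun s' _ => ?_
        simp only [nextDist, ← sum_sub_distrib, ← mul_sub]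
        refine (abs_sum_le_sum_abs _ _).trans <| sum_le_sum fun s _ =>
          (abs_sum_le_sum_abs _ _).trans <| le_of_eq <| sum_congr rfl fun a _ => ?_
        rw [abs_mul, abs_of_nonneg (hw s a)]
    _ = ∑ s, ∑ a, y s * pol s a * ∑ s', |P s a s' - P' s a s'| :=
        sum_sum_sum_eq_sum_sum_mul_sum (fun s a => y s * pol s a)
          fun s a s' => |P s a s' - P' s a s'|
    _ ≤ ∑ s, ∑ a, y s * pol s a * εP := sum_le_sum fun s _ => sum_le_sum fun a _ =>
        mul_le_mul_of_nonneg_left (hPclose s a) (hw s a)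
    _ = εP := by
        simp only [mul_comm _ εP, ← mul_sum, (hpol _).2, mul_one, hy.2]

theorem isDist_nextDist {P : S → A → S → ℝ} {pol : S → A → ℝ}
    (hP : IsTransition P) (hpol : IsPolicy pol) {x : S → ℝ} (hx : IsDist x) :
    IsDist (nextDist P pol x) := by
  refine ⟨fun s' => sum_nonneg fun s _ => sum_nonneg fun a _ =>
    mul_nonneg (mul_nonneg (hx.1 s) ((hpol s).1 a)) ((hP s a).1 s'), ?_⟩
  calc ∑ s', nextDist P pol x s' = ∑ s, ∑ a, x s * pol s a * ∑ s', P s a s' :=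
        sum_sum_sum_eq_sum_sum_mul_sum (fun s a => x s * pol s a) P
    _ = 1 := by simp only [(hP _ _).2, mul_one, ← mul_sum, (hpol _).2, hx.2]

theorem isDist_stateDist {P : S → A → S → ℝ} {pol : S → A → ℝ} {d0 : S → ℝ}
    (hP : IsTransition P) (hpol : IsPolicy pol) (hd0 : IsDist d0) (t : ℕ) :
    IsDist (stateDist P pol d0 t) := by
  induction t with
  | zero => exact hd0
  | succ t ih =>
    rw [stateDist_succ]
    exact isDist_nextDist hP hpol ih

theorem sum_abs_stateDist_sub_le {P P' : S → A → S → ℝ} {pol : S → A → ℝ} {d0 : S → ℝ}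
    {εP : ℝ} (hP : IsTransition P) (hP' : IsTransition P')
    (hPclose : ∀ s a, ∑ s', |P s a s' - P' s a s'| ≤ εP) (hpol : IsPolicy pol)
    (hd0 : IsDist d0) (t : ℕ) :
    ∑ s, |stateDist P pol d0 t s - stateDist P' pol d0 t s| ≤ t * εP := by
  induction t with
  | zero => simp [stateDist]
  | succ t ih =>
    rw [stateDist_succ, stateDist_succ]
    set x := stateDist P pol d0 t
    set y := stateDist P' pol d0 t
    calc ∑ s, |nextDist P pol x s - nextDist P' pol y s|
        ≤ ∑ s, (|nextDist P pol (x - y) s| + |nextDist P pol y s - nextDist P' pol y s|) :=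
          sum_le_sum fun s _ => by
            rw [← nextDist_sub, Pi.sub_apply]
            exact abs_sub_le _ _ _
      _ ≤ ∑ s, |(x - y) s| + εP := by
          rw [sum_add_distrib]
          exact add_le_add (sum_abs_nextDist_le hP hpol _)
            (sum_abs_nextDist_sub_nextDist_le hPclose hpol (isDist_stateDist hP' hpol hd0 t))
      _ ≤ (t + 1 : ℕ) * εP := by
          simp only [Pi.sub_apply, Nat.cast_succ]
          linarith

theorem IsDist.le_one {x : S → ℝ} (hx : IsDist x) (s : S) : x s ≤ 1 :=
  hx.2 ▸ single_le_sum (fun s _ => hx.1 s) (mem_univ s)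

theorem summable_pow_mul_stateDist {P : S → A → S → ℝ} {pol : S → A → ℝ} {d0 : S → ℝ} {γ : ℝ}
    (hγ0 : 0 ≤ γ) (hγ1 : γ < 1) (hP : IsTransition P) (hpol : IsPolicy pol) (hd0 : IsDist d0)
    (s : S) : Summable fun t => γ ^ t * stateDist P pol d0 t s := by
  refine (summable_geometric_of_lt_one hγ0 hγ1).of_norm_bounded fun t => ?_
  have hx := isDist_stateDist hP hpol hd0 t
  rw [Real.norm_eq_abs, abs_of_nonneg (mul_nonneg (pow_nonneg hγ0 t) (hx.1 s))]
  exact mul_le_of_le_one_right (pow_nonneg hγ0 t) (hx.le_one s)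

theorem occupancy_sub_occupancy {P P' : S → A → S → ℝ} {pol : S → A → ℝ} {d0 : S → ℝ} {γ : ℝ}
    (hγ0 : 0 ≤ γ) (hγ1 : γ < 1) (hP : IsTransition P) (hP' : IsTransition P')
    (hpol : IsPolicy pol) (hd0 : IsDist d0) (s : S) :
    occupancy P pol d0 γ s - occupancy P' pol d0 γ s =
      (1 - γ) * ∑' t, γ ^ t * (stateDist P pol d0 t s - stateDist P' pol d0 t s) := by
  rw [occupancy, occupancy, ← mul_sub, ← Summable.tsum_sub
    (summable_pow_mul_stateDist hγ0 hγ1 hP hpol hd0 s)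
    (summable_pow_mul_stateDist hγ0 hγ1 hP' hpol hd0 s)]
  simp only [mul_sub]

end MDP

theorem occupancy_diff_epsilon_bound_general
    {S A : Type*} [Fintype S] [Fintype A]
    (γ εP : ℝ) (hγ0 : 0 ≤ γ) (hγ1 : γ < 1)
    (d0 : S → ℝ) (hd0 : IsDist d0)
    (P P' : S → A → S → ℝ)
    (hP : IsTransition P) (hP' : IsTransition P')
    (hPclose : ∀ s a, ∑ s' : S, |P s a s' - P' s a s'| ≤ εP)
    (pol : S → A → ℝ) (hpol : IsPolicy pol) :
    ∑ s : S, |occupancy P pol d0 γ s - occupancy P' pol d0 γ s| ≤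
      γ * (1 - γ)⁻¹ * εP := by
  have hγ : ‖γ‖ < 1 := by rwa [Real.norm_of_nonneg hγ0]
  have hstep : ∀ t : ℕ, ∑ s, |γ ^ t * (stateDist P pol d0 t s - stateDist P' pol d0 t s)| ≤
      t * γ ^ t * εP := fun t => by
    simp only [abs_mul, abs_of_nonneg (pow_nonneg hγ0 t), ← mul_sum]
    exact (mul_le_mul_of_nonneg_left (sum_abs_stateDist_sub_le hP hP' hPclose hpol hd0 t)
      (pow_nonneg hγ0 t)).trans_eq (by ring)
  have hsum : Summable fun t : ℕ => (t : ℝ) * γ ^ t * εP := by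
    simpa using (summable_pow_mul_geometric_of_norm_lt_one 1 hγ).mul_right εP
  calc ∑ s, |occupancy P pol d0 γ s - occupancy P' pol d0 γ s|
      = (1 - γ) * ∑ s, |∑' t, γ ^ t * (stateDist P pol d0 t s - stateDist P' pol d0 t s)| := by
        simp only [occupancy_sub_occupancy hγ0 hγ1 hP hP' hpol hd0, abs_mul,
          abs_of_nonneg (sub_nonneg.2 hγ1.le), mul_sum]
    _ ≤ (1 - γ) * ∑' t : ℕ, t * γ ^ t * εP := by
        gcongr
        exact sum_abs_tsum_le_tsum hsum hstep
    _ = γ * (1 - γ)⁻¹ * εP := by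
        rw [tsum_mul_right, tsum_coe_mul_geometric_of_norm_lt_one hγ]
        field_simp [(sub_pos.2 hγ1).ne']

/-- If the transition functions of `M` and `M'` are within `εP` in L1 distance for all
state-action pairs, then for every policy the L1 distance between the discounted
state occupancies is at most `γ·(1−γ)⁻¹·εP`. -/
theorem occupancy_diff_epsilon_bound
    {S A : Type*} [Fintype S] [Fintype A]
    (γ εP : ℝ) (hγ0 : 0 ≤ γ) (hγ1 : γ < 1) (hεP : 0 ≤ εP)
    (d0 : S → ℝ) (hd0 : IsDist d0)
    (P P' : S → A → S → ℝ)
    (hP : IsTransition P) (hP' : IsTransition P')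
    (hPclose : ∀ s a, ∑ s' : S, |P s a s' - P' s a s'| ≤ εP)
    (pol : S → A → ℝ) (hpol : IsPolicy pol) :
    ∑ s : S, |occupancy P pol d0 γ s - occupancy P' pol d0 γ s| ≤
      γ * (1 - γ)⁻¹ * εP :=
  occupancy_diff_epsilon_bound_general γ εP hγ0 hγ1 d0 hd0 P P' hP hP' hPclose pol hpol
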